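/- For three points k₄, k₅, k₆ ∈ ℝ² and the constrained minimization of (1/3)Σ‖k'_i − k_i‖² subject to collinearity C_P = det[[1,1,1],[c₄,c₅,c₆],[d₄,d₅,d₆]] = 0 via Lagrange multipliers, every critical point (k'₄,k'₅,k'₆) either is a singular point of C_P = 0 (i.e., k'₄ = k'₅ = k'₆) or consists of the orthogonal projections of k₄, k₅, k₆ onto a line through their centroid in a principal direction of their covariance matrix. -/

import Mathlib

/-- The objective: mean squared displacement of the triple `q` from the triple `k`. -/
noncomputable def obj (k q : Fin 3 → Fin 2 → ℝ) : ℝ :=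
  (1/3) * ∑ i, ((q i 0 - k i 0)^2 + (q i 1 - k i 1)^2)

/-- The collinearity polynomial `C_P` of three planar points. -/
def CP (q : Fin 3 → Fin 2 → ℝ) : ℝ :=
  (Matrix.of ![![(1:ℝ), 1, 1], ![q 0 0, q 1 0, q 2 0], ![q 0 1, q 1 1, q 2 1]]).det

/-- The dot product on `ℝ²`. -/
def dot (a b : Fin 2 → ℝ) : ℝ := a 0 * b 0 + a 1 * b 1

/-- The centroid of three planar points. -/
noncomputable def centroid3 (k : Fin 3 → Fin 2 → ℝ) : Fin 2 → ℝ := (3⁻¹ : ℝ) • (k 0 + k 1 + k 2)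

/-- The covariance matrix `∑ (k i − g)(k i − g)ᵀ` of three planar points. -/
noncomputable def covMat (k : Fin 3 → Fin 2 → ℝ) : Matrix (Fin 2) (Fin 2) ℝ :=
  Matrix.of fun r c => ∑ i, (k i r - centroid3 k r) * (k i c - centroid3 k c)


/-! The gradient of `C_P` in `k' i` is `perp (k' (i+1) - k' (i+2))`, with `perp` the rotation by
a right angle, so stationarity of the Lagrangian reads `k' i - k i = c • perp (k' (i+1) - k' (i+2))`
with `c = -3λ/2`.
Summing over `i`, the triples `k` and `k'` have the same centroid `g`. If the `k' i` are not all
equal they lie on a line with unit direction `v`, which therefore passes through `g`, and every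
displacement `k i - k' i` is normal to it: `k' i = g + τ i • v` is the orthogonal projection of
`k i`, and `k i - g = τ i • v + s i • perp v` with `s i = -c (τ (i+1) - τ (i+2))`. Then
`covMat k *ᵥ v = (∑ τ i ^ 2) • v + (∑ τ i * s i) • perp v`, and the cyclic sum
`∑ τ i (τ (i+1) - τ (i+2))` vanishes. -/

open Matrix

def perp : (Fin 2 → ℝ) →ₗ[ℝ] (Fin 2 → ℝ) := toLin' !![0, 1; -1, 0]

@[simp] lemma perp_apply_zero (a : Fin 2 → ℝ) : perp a 0 = a 1 := by
  simp [perp, vecHead, vecTail]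

@[simp] lemma perp_apply_one (a : Fin 2 → ℝ) : perp a 1 = -a 0 := by
  simp [perp, vecHead]

lemma dot_eq_dotProduct (a b : Fin 2 → ℝ) : dot a b = a ⬝ᵥ b := by
  simp [dot, dotProduct, Fin.sum_univ_two]

lemma dotProduct_perp_self (a : Fin 2 → ℝ) : a ⬝ᵥ perp a = 0 := by
  simp only [dotProduct, Fin.sum_univ_two, perp_apply_zero, perp_apply_one]; ring

lemma perp_dotProduct_self (a : Fin 2 → ℝ) : perp a ⬝ᵥ a = 0 := by
  rw [dotProduct_comm, dotProduct_perp_self]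

lemma dotProduct_perp_swap (a b : Fin 2 → ℝ) : a ⬝ᵥ perp b = -(b ⬝ᵥ perp a) := by
  simp only [dotProduct, Fin.sum_univ_two, perp_apply_zero, perp_apply_one]; ring

lemma eq_smul_add_smul_perp {v : Fin 2 → ℝ} (hv : v ⬝ᵥ v = 1) (z : Fin 2 → ℝ) :
    z = (z ⬝ᵥ v) • v + (z ⬝ᵥ perp v) • perp v := by
  simp only [dotProduct, Fin.sum_univ_two] at hv ⊢
  ext j; fin_cases j <;> simp <;> linear_combination (-z _) * hv

lemma CP_eq_dotProduct_perp (q : Fin 3 → Fin 2 → ℝ) (a : Fin 3) :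
    CP q = (q (a + 1) - q a) ⬝ᵥ perp (q (a + 2) - q a) := by
  fin_cases a <;> simp [CP, det_fin_three, dotProduct, Fin.sum_univ_two] <;> ring

lemma exists_line_of_CP_eq_zero {q : Fin 3 → Fin 2 → ℝ} (hCP : CP q = 0)
    (hne : ¬(q 0 = q 1 ∧ q 1 = q 2)) :
    ∃ v : Fin 2 → ℝ, ∃ p : ℝ, v ⬝ᵥ v = 1 ∧ ∀ i, q i ⬝ᵥ perp v = p := by
  obtain ⟨a, ha⟩ : ∃ a : Fin 3, q (a + 1) - q a ≠ 0 := by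
    by_cases h01 : q 0 = q 1
    · exact ⟨1, sub_ne_zero.2 fun h => hne ⟨h01, h.symm⟩⟩
    · exact ⟨0, sub_ne_zero.2 fun h => h01 h.symm⟩
  set w := q (a + 1) - q a
  have hw : 0 < w ⬝ᵥ w := lt_of_le_of_ne (Finset.sum_nonneg fun i _ => mul_self_nonneg (w i))
    (Ne.symm (dotProduct_self_eq_zero.not.2 ha))
  have hcollinear : ∀ i, (q i - q a) ⬝ᵥ perp w = 0 := by
    have hi : ∀ a i : Fin 3, i = a ∨ i = a + 1 ∨ i = a + 2 := by decide
    intro i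
    rcases hi a i with rfl | rfl | rfl
    · simp
    · exact dotProduct_perp_self w
    · rw [dotProduct_perp_swap, ← CP_eq_dotProduct_perp, hCP, neg_zero]
  refine ⟨(√(w ⬝ᵥ w))⁻¹ • w, q a ⬝ᵥ perp ((√(w ⬝ᵥ w))⁻¹ • w), ?_, fun i => ?_⟩
  · rw [smul_dotProduct, dotProduct_smul, smul_eq_mul, smul_eq_mul, ← mul_assoc,
      ← mul_inv, Real.mul_self_sqrt hw.le, inv_mul_cancel₀ hw.ne']
  · rw [map_smul, dotProduct_smul, dotProduct_smul, ← sub_eq_zero, ← smul_sub, ← sub_dotProduct,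
      hcollinear i, smul_zero]

lemma eq_centroid3_add_smul {q : Fin 3 → Fin 2 → ℝ} {v : Fin 2 → ℝ} {p : ℝ}
    (hv : v ⬝ᵥ v = 1) (hline : ∀ i, q i ⬝ᵥ perp v = p) (i : Fin 3) :
    q i = centroid3 q + ((q i - centroid3 q) ⬝ᵥ v) • v := by
  have hnormal : (q i - centroid3 q) ⬝ᵥ perp v = 0 := by
    simp only [centroid3, smul_add, sub_dotProduct, add_dotProduct, smul_dotProduct, hline,
      smul_eq_mul]
    ring
  conv_lhs => rw [← add_sub_cancel (centroid3 q) (q i),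
    eq_smul_add_smul_perp hv (q i - centroid3 q), hnormal]
  simp

lemma covMat_mulVec (k : Fin 3 → Fin 2 → ℝ) (v : Fin 2 → ℝ) :
    covMat k *ᵥ v = ∑ i, ((k i - centroid3 k) ⬝ᵥ v) • (k i - centroid3 k) := by
  ext r
  simp only [mulVec, dotProduct, covMat, of_apply, Fin.sum_univ_two, Fin.sum_univ_three,
    Pi.sub_apply, Finset.sum_apply, Pi.smul_apply, smul_eq_mul]
  ring

lemma covMat_mulVec_eq_smul {k : Fin 3 → Fin 2 → ℝ} {v : Fin 2 → ℝ} {τ s : Fin 3 → ℝ}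
    (hv : v ⬝ᵥ v = 1) (hk : ∀ i, k i - centroid3 k = τ i • v + s i • perp v)
    (hτs : ∑ i, τ i * s i = 0) :
    covMat k *ᵥ v = (∑ i, τ i ^ 2) • v := by
  have hτ : ∀ i, (k i - centroid3 k) ⬝ᵥ v = τ i := fun i => by
    simp only [hk, add_dotProduct, smul_dotProduct, hv, perp_dotProduct_self, smul_eq_mul,
      mul_one, mul_zero, add_zero]
  simp only [covMat_mulVec, hτ]
  simp only [hk, smul_add, smul_smul, Finset.sum_add_distrib, ← Finset.sum_smul, hτs, zero_smul,
    add_zero, sq]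

lemma differentiable_obj (k : Fin 3 → Fin 2 → ℝ) : Differentiable ℝ (obj k) := by
  unfold obj; fun_prop

lemma differentiable_CP : Differentiable ℝ CP := by
  unfold CP
  simp only [det_fin_three, of_apply, cons_val', cons_val_zero, cons_val_fin_one, cons_val_one,
    cons_val]
  fun_prop

lemma linear_coeff_eq_zero_of_fderiv_eq_zero {E : Type*} [NormedAddCommGroup E]
    [NormedSpace ℝ E] {F : E → ℝ} {x : E} (hF : DifferentiableAt ℝ F x)
    (hx : fderiv ℝ F x = 0) {u : E} {a b c : ℝ}
    (hquad : ∀ t : ℝ, F (x + t • u) = a + b * t + c * t ^ 2) : b = 0 := by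
  have h₀ : HasDerivAt (fun t : ℝ => F (x + t • u)) 0 0 := by
    have h := hF.hasFDerivAt.hasLineDerivAt u
    rw [hx] at h
    exact h
  have hb : HasDerivAt (fun t : ℝ => a + b * t + c * t ^ 2) b 0 := by
    simpa using (((hasDerivAt_id (0 : ℝ)).const_mul b).const_add a).fun_add
      ((hasDerivAt_pow 2 (0 : ℝ)).const_mul c)
  rw [funext hquad] at h₀
  exact hb.unique h₀

def LagrangeCondition (k k' : Fin 3 → Fin 2 → ℝ) (c : ℝ) : Prop :=
  ∀ i, k' i - k i = c • perp (k' (i + 1) - k' (i + 2))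

lemma lagrangeCondition_of_fderiv_eq_zero {k k' : Fin 3 → Fin 2 → ℝ} {lam : ℝ}
    (hcrit : fderiv ℝ (fun q => obj k q + lam * CP q) k' = 0) :
    LagrangeCondition k k' (-(3 / 2) * lam) := by
  have hdiff : Differentiable ℝ (fun q => obj k q + lam * CP q) :=
    (differentiable_obj k).add (differentiable_CP.const_mul lam)
  intro i
  ext j
  have h := linear_coeff_eq_zero_of_fderiv_eq_zero (hdiff k') hcrit
    (u := Pi.single i (Pi.single j 1)) (a := obj k k' + lam * CP k') (c := 1 / 3)
    (b := 2 / 3 * (k' i j - k i j) + lam * perp (k' (i + 1) - k' (i + 2)) j) fun t => by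
      fin_cases i <;> fin_cases j <;>
        simp [obj, CP, det_fin_three, Fin.sum_univ_three, Pi.single_apply] <;> ring
  simp only [Pi.sub_apply, Pi.smul_apply, smul_eq_mul]
  linear_combination (3 / 2) * h

namespace LagrangeCondition

variable {k k' : Fin 3 → Fin 2 → ℝ} {c : ℝ}

lemma centroid3_eq (hL : LagrangeCondition k k' c) : centroid3 k' = centroid3 k := by
  have hsum : (k' 0 - k 0) + (k' 1 - k 1) + (k' 2 - k 2) = 0 := by
    rw [hL 0, hL 1, hL 2, ← smul_add, ← smul_add, ← map_add, ← map_add]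
    simp
  have h : k' 0 + k' 1 + k' 2 = k 0 + k 1 + k 2 := by
    rw [← sub_eq_zero, ← hsum]
    abel
  rw [centroid3, centroid3, h]

theorem eigenvector_and_projection (hL : LagrangeCondition k k' c) {v : Fin 2 → ℝ} {p : ℝ}
    (hv : v ⬝ᵥ v = 1) (hline : ∀ i, k' i ⬝ᵥ perp v = p) :
    (∃ μ : ℝ, covMat k *ᵥ v = μ • v) ∧
      ∀ i, k' i = centroid3 k + ((k i - centroid3 k) ⬝ᵥ v) • v := by
  set g := centroid3 k
  set τ : Fin 3 → ℝ := fun i => (k' i - g) ⬝ᵥ v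
  have hk' : ∀ i, k' i = g + τ i • v := by
    simpa only [hL.centroid3_eq] using eq_centroid3_add_smul hv hline
  have hk : ∀ i, k i - g = τ i • v + (-c * (τ (i + 1) - τ (i + 2))) • perp v := fun i => by
    have h := hL i
    rw [hk' (i + 1), hk' (i + 2), add_sub_add_left_eq_sub, ← sub_smul, map_smul, hk' i] at h
    linear_combination (norm := module) -h
  have hτ : ∀ i, (k i - g) ⬝ᵥ v = τ i := fun i => by
    simp only [hk, add_dotProduct, smul_dotProduct, hv, perp_dotProduct_self, smul_eq_mul,
      mul_one, mul_zero, add_zero]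
  refine ⟨⟨_, covMat_mulVec_eq_smul hv hk ?_⟩, fun i => by rw [hτ, ← hk']⟩
  simp only [Fin.sum_univ_three, Fin.reduceAdd]
  ring

end LagrangeCondition

/-- Every critical point of the Lagrangian `L = obj + λ C_P` lying on the collinearity
variety either is a singular point of `C_P = 0` (all three points coincide), or consists of
the orthogonal projections of the `k i` onto a line through their centroid in a principal
direction of their covariance matrix. -/
theorem lagrange_critical_points_CP (k k' : Fin 3 → Fin 2 → ℝ)
    (hconstraint : CP k' = 0)
    (hcrit : ∃ lam : ℝ, fderiv ℝ (fun q => obj k q + lam * CP q) k' = 0) :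
    (k' 0 = k' 1 ∧ k' 1 = k' 2) ∨
      ∃ v : Fin 2 → ℝ, dot v v = 1 ∧ (∃ μ : ℝ, (covMat k).mulVec v = μ • v) ∧
        ∀ i, k' i = centroid3 k + dot (k i - centroid3 k) v • v := by
  obtain ⟨lam, hcrit⟩ := hcrit
  by_cases hsingular : k' 0 = k' 1 ∧ k' 1 = k' 2
  · exact Or.inl hsingular
  obtain ⟨v, p, hv, hline⟩ := exists_line_of_CP_eq_zero hconstraint hsingular
  obtain ⟨heigen, hproj⟩ :=
    (lagrangeCondition_of_fderiv_eq_zero hcrit).eigenvector_and_projection hv hline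
  refine Or.inr ⟨v, by rwa [dot_eq_dotProduct], heigen, fun i => ?_⟩
  rw [dot_eq_dotProduct]
  exact hproj i
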